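/- arXiv:2501.11367 — 6 statements merged into one kernel-verified Lean document; each statement's English description precedes it below -/
import Mathlib

section
/- The zero set Z(ρ) = {λ ∈ ℝ² : ρ̂(λ) = 0} is contained in the union of the two subgroups H₁ = ℤ² and H₂ = {(λ₁, λ₂) : λ₁ − λ₂ ∈ (1/(2t+1))ℤ} of ℝ². -/
open MeasureTheory Real Complex
open scoped ENNReal

noncomputable def mu (t : ℝ) : Measure ℝ :=
  (1/2 : ℝ≥0∞) • (volume.restrict (Set.Icc t (t + 1)))

noncomputable def rho (t : ℝ) : Measure (ℝ × ℝ) :=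
  (mu t).prod (Measure.dirac 0) + (Measure.dirac 0).prod (mu t)

noncomputable def rhoHat (t : ℝ) (ξ : ℝ × ℝ) : ℂ :=
  ∫ x, Complex.exp (-2 * (π : ℂ) * Complex.I * ((ξ.1 * x.1 + ξ.2 * x.2 : ℝ) : ℂ)) ∂(rho t)

noncomputable def sinc (x : ℝ) : ℝ :=
  if x = 0 then 1 else Real.sin (π * x) / (π * x)

instance mu_finite (t : ℝ) : IsFiniteMeasure (mu t) := by
  refine ⟨?_⟩
  rw [mu]
  rw [Measure.smul_apply, Measure.restrict_apply_univ, Real.volume_Icc]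
  simp only [smul_eq_mul]
  exact lt_of_le_of_lt (mul_le_mul_right (le_of_eq (by norm_num)) _)
    (by norm_num : (1/2 : ℝ≥0∞) * 1 < ⊤)

lemma mu_integral (t s : ℝ) :
    ∫ x, Complex.exp (-2 * (π : ℂ) * Complex.I * ((s * x : ℝ) : ℂ)) ∂(mu t)
      = (1/2 : ℂ) * Complex.exp ((-(π * s * (2*t+1)) : ℝ) * Complex.I) * (_root_.sinc s : ℝ) := by
  rw [mu, integral_smul_measure]
  rw [integral_Icc_eq_integral_Ioc, ← intervalIntegral.integral_of_le (by linarith : t ≤ t + 1)]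
  have htr : ((1/2 : ℝ≥0∞)).toReal = (1/2 : ℝ) := by norm_num
  rw [htr]
  by_cases hs : s = 0
  · subst hs
    simp only [zero_mul, Complex.ofReal_zero, mul_zero, Complex.exp_zero,
      intervalIntegral.integral_const, smul_eq_mul, mul_one, _root_.sinc, if_pos rfl]
    push_cast
    ring_nf
    norm_num
  · have hc : (-2 * (π:ℂ) * Complex.I * s) ≠ 0 := by
      apply mul_ne_zero
      apply mul_ne_zero
      apply mul_ne_zero
      · norm_num
      · exact_mod_cast Real.pi_ne_zero
      · exact Complex.I_ne_zero
      · exact_mod_cast hs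
    have harg : ∀ x : ℝ, (-2 * (π:ℂ) * Complex.I * ((s * x : ℝ) : ℂ))
        = (-2 * (π:ℂ) * Complex.I * s) * x := by
      intro x; push_cast; ring
    simp_rw [harg]
    rw [integral_exp_mul_complex hc]
    have e1 : (-2 * (π:ℂ) * Complex.I * s) * ((t+1 : ℝ) : ℂ)
        = ((-(π * s * (2*t+1)) : ℝ) : ℂ) * Complex.I + (-((π:ℂ) * s)) * Complex.I := by
      push_cast; ring
    have e2 : (-2 * (π:ℂ) * Complex.I * s) * ((t : ℝ) : ℂ)
        = ((-(π * s * (2*t+1)) : ℝ) : ℂ) * Complex.I + ((π:ℂ) * s) * Complex.I := by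
      push_cast; ring
    rw [e1, e2, Complex.exp_add, Complex.exp_add]
    have h3 : Complex.exp ((-((π:ℂ) * s)) * Complex.I) - Complex.exp (((π:ℂ) * s) * Complex.I)
        = -2 * Complex.sin ((π:ℂ) * s) * Complex.I := by
      rw [show (-((π:ℂ) * s)) * Complex.I = (-((π:ℂ)*s)) * Complex.I from rfl,
        Complex.exp_mul_I, Complex.exp_mul_I, Complex.cos_neg, Complex.sin_neg]
      ring
    rw [_root_.sinc, if_neg hs]
    push_cast
    rw [← mul_sub, h3]
    have hps : ((π : ℂ) * s) ≠ 0 := by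
      apply mul_ne_zero
      · exact_mod_cast Real.pi_ne_zero
      · exact_mod_cast hs
    rw [Complex.real_smul]
    push_cast
    have h4 : (-2 * Complex.sin ((π:ℂ) * s) * Complex.I) / (-2 * (π:ℂ) * Complex.I * s)
        = Complex.sin ((π:ℂ) * s) / ((π:ℂ) * s) := by
      rw [div_eq_div_iff hc hps]; ring
    rw [mul_div_assoc, h4]
    ring

lemma rhoHat_eq (t : ℝ) (lam : ℝ × ℝ) :
    rhoHat t lam
      = (∫ x, Complex.exp (-2 * (π : ℂ) * Complex.I * ((lam.1 * x : ℝ) : ℂ)) ∂(mu t))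
      + (∫ x, Complex.exp (-2 * (π : ℂ) * Complex.I * ((lam.2 * x : ℝ) : ℂ)) ∂(mu t)) := by
  have hg : Continuous (fun x : ℝ × ℝ =>
      Complex.exp (-2 * (π : ℂ) * Complex.I * ((lam.1 * x.1 + lam.2 * x.2 : ℝ) : ℂ))) := by
    fun_prop
  have hb : ∀ x : ℝ × ℝ,
      ‖Complex.exp (-2 * (π : ℂ) * Complex.I * ((lam.1 * x.1 + lam.2 * x.2 : ℝ) : ℂ))‖ ≤ 1 := by
    intro x
    rw [Complex.norm_exp]
    have : (-2 * (π : ℂ) * Complex.I * ((lam.1 * x.1 + lam.2 * x.2 : ℝ) : ℂ)).re = 0 := by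
      simp
    rw [this, Real.exp_zero]
  have h1 : Integrable (fun x : ℝ × ℝ =>
      Complex.exp (-2 * (π : ℂ) * Complex.I * ((lam.1 * x.1 + lam.2 * x.2 : ℝ) : ℂ)))
      ((mu t).prod (Measure.dirac 0)) :=
    (integrable_const 1).mono' hg.aestronglyMeasurable (Filter.Eventually.of_forall fun x => by
      simpa using hb x)
  have h2 : Integrable (fun x : ℝ × ℝ =>
      Complex.exp (-2 * (π : ℂ) * Complex.I * ((lam.1 * x.1 + lam.2 * x.2 : ℝ) : ℂ)))
      ((Measure.dirac 0).prod (mu t)) :=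
    (integrable_const 1).mono' hg.aestronglyMeasurable (Filter.Eventually.of_forall fun x => by
      simpa using hb x)
  rw [rhoHat, rho, integral_add_measure h1 h2]
  rw [Measure.prod_dirac, Measure.dirac_prod]
  rw [integral_map measurable_prodMk_right.aemeasurable
    hg.aestronglyMeasurable]
  rw [integral_map measurable_prodMk_left.aemeasurable
    hg.aestronglyMeasurable]
  simp

lemma sinc_zero {x : ℝ} (h : _root_.sinc x = 0) : ∃ m : ℤ, x = m := by
  rw [_root_.sinc] at h
  split_ifs at h with hx
  · norm_num at h
  · have hpx : π * x ≠ 0 := mul_ne_zero Real.pi_ne_zero hx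
    have hsin : Real.sin (π * x) = 0 := by
      rcases div_eq_zero_iff.mp h with h' | h'
      · exact h'
      · exact absurd h' hpx
    obtain ⟨n, hn⟩ := Real.sin_eq_zero_iff.mp hsin
    refine ⟨n, ?_⟩
    have := mul_left_cancel₀ Real.pi_ne_zero (show π * x = π * (n : ℝ) by linarith)
    linarith

theorem stmt2 (t : ℝ) (ht : t ≠ -(1/2)) :
    {lam : ℝ × ℝ | rhoHat t lam = 0} ⊆
      {lam : ℝ × ℝ | ∃ m n : ℤ, lam = ((m : ℝ), (n : ℝ))} ∪
      {lam : ℝ × ℝ | ∃ k : ℤ, lam.1 - lam.2 = (k : ℝ) / (2 * t + 1)} := by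
  intro lam hlam
  have h2t : (2 * t + 1) ≠ 0 := fun h => ht (by linarith)
  simp only [Set.mem_setOf_eq] at hlam
  rw [rhoHat_eq, mu_integral, mu_integral] at hlam
  by_cases hu : _root_.sinc lam.1 = 0
  · left
    have hv : _root_.sinc lam.2 = 0 := by
      rw [hu] at hlam
      simp only [Complex.ofReal_zero, mul_zero, zero_add] at hlam
      rcases mul_eq_zero.mp hlam with h' | h'
      · rcases mul_eq_zero.mp h' with h'' | h''
        · norm_num at h''
        · exact absurd h'' (Complex.exp_ne_zero _)
      · exact_mod_cast h'
    obtain ⟨m, hm⟩ := sinc_zero hu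
    obtain ⟨n, hn⟩ := sinc_zero hv
    exact ⟨m, n, Prod.ext hm hn⟩
  · right
    have hu' : ((_root_.sinc lam.1 : ℝ) : ℂ) ≠ 0 := Complex.ofReal_ne_zero.mpr hu
    set a : ℝ := -(π * lam.1 * (2*t+1)) with ha
    set b : ℝ := -(π * lam.2 * (2*t+1)) with hb
    have key : Complex.exp (((a - b : ℝ) : ℂ) * Complex.I)
        = ((-(_root_.sinc lam.2 / _root_.sinc lam.1) : ℝ) : ℂ) := by
      rw [Complex.ofReal_sub, sub_mul, Complex.exp_sub]
      push_cast
      rw [div_eq_iff (Complex.exp_ne_zero _)]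
      rw [neg_mul, div_mul_eq_mul_div, eq_comm, neg_eq_iff_eq_neg, div_eq_iff hu', eq_comm]
      linear_combination (-2 : ℂ) * hlam
    have habs : |(-(_root_.sinc lam.2 / _root_.sinc lam.1))| = 1 := by
      have h := Complex.norm_exp_ofReal_mul_I (a - b)
      rw [key] at h
      rwa [Complex.norm_real, Real.norm_eq_abs] at h
    have hsq : (-(_root_.sinc lam.2 / _root_.sinc lam.1))^2 = 1 := by
      rw [← _root_.sq_abs, habs]; norm_num
    have key2 : Complex.exp (((2*(a-b) : ℝ) : ℂ) * Complex.I) = 1 := by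
      have h2 : ((2*(a-b) : ℝ) : ℂ) * Complex.I
          = ((a-b : ℝ) : ℂ) * Complex.I + ((a-b : ℝ) : ℂ) * Complex.I := by
        push_cast; ring
      rw [h2, Complex.exp_add, key, ← Complex.ofReal_mul]
      rw [show (-(_root_.sinc lam.2 / _root_.sinc lam.1)) * (-(_root_.sinc lam.2 / _root_.sinc lam.1)) = 1 from by
        linear_combination hsq]
      exact Complex.ofReal_one
    obtain ⟨n, hn⟩ := Complex.exp_eq_one_iff.mp key2
    have him : 2*(a-b) = n * (2*π) := by
      have h := congrArg Complex.im hn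
      simpa using h
    rw [ha, hb] at him
    refine ⟨-n, ?_⟩
    rw [eq_div_iff h2t]
    push_cast
    have hmain : π * ((lam.1 - lam.2) * (2*t+1)) = π * (-(n:ℝ)) := by
      linear_combination (-(1:ℝ)/2) * him
    exact mul_left_cancel₀ Real.pi_ne_zero hmain
end

section
/- The intersection of the zero set Z(ρ) with the diagonal line {(x,x) : x ∈ ℝ} equals {(n,n) : n ∈ ℤ, n ≠ 0}. -/
open MeasureTheory Real Complex
open scoped ENNReal

/-! On the diagonal both marginals of `ρ` contribute the same transform of `μ`, so
`ρ̂(x, x) = ∫_t^{t+1} e^{-2πixs} ds`. For `x = 0` this is `1`; otherwise it equals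
`e^{-2πixt} (e^{-2πix} - 1) / (-2πix)`, which vanishes exactly when `x` is an integer. -/

instance (t : ℝ) : IsFiniteMeasure (mu t) where
  measure_univ_lt_top := by simp [mu]

instance (t : ℝ) : IsFiniteMeasure (rho t) := by rw [rho]; infer_instance

section

variable {E : Type*} [NormedAddCommGroup E] [NormedSpace ℝ E]

lemma integral_mu (t : ℝ) (f : ℝ → E) : ∫ s, f s ∂mu t = (2⁻¹ : ℝ) • ∫ s in t..t + 1, f s := by
  rw [mu, integral_smul_measure, integral_Icc_eq_integral_Ioc,
    ← intervalIntegral.integral_of_le (by linarith)]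
  norm_num

lemma integral_rho {t : ℝ} {f : ℝ × ℝ → E} (hf : Integrable f (rho t)) :
    ∫ p, f p ∂rho t = ∫ s, f (s, 0) ∂mu t + ∫ s, f (0, s) ∂mu t := by
  rw [rho, integrable_add_measure] at hf
  rw [rho, integral_add_measure hf.1 hf.2, Measure.prod_dirac, Measure.dirac_prod] at *
  rw [integral_map measurable_prodMk_right.aemeasurable hf.1.aestronglyMeasurable,
    integral_map measurable_prodMk_left.aemeasurable hf.2.aestronglyMeasurable]

end

lemma rhoHat_diag (t x : ℝ) :
    rhoHat t (x, x) = ∫ s in t..t + 1, cexp (-2 * π * I * x * s) := by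
  have hint : Integrable (fun p : ℝ × ℝ ↦
      cexp (-2 * π * I * ((x * p.1 + x * p.2 : ℝ) : ℂ))) (rho t) :=
    Integrable.of_bound (by fun_prop) 1 (.of_forall fun p ↦ by simp [Complex.norm_exp])
  rw [rhoHat, integral_rho hint, integral_mu, integral_mu]
  simp only [mul_zero, add_zero, zero_add, ofReal_mul, ← mul_assoc]
  rw [← smul_add, ← two_smul ℝ, smul_smul]
  norm_num

lemma intervalIntegral_cexp_mul_eq_zero_iff (c : ℂ) (t : ℝ) :
    ∫ s in t..t + 1, cexp (c * s) = 0 ↔ c ≠ 0 ∧ cexp c = 1 := by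
  rcases eq_or_ne c 0 with rfl | hc
  · simp
  rw [integral_exp_mul_complex hc, div_eq_zero_iff, sub_eq_zero, ofReal_add, ofReal_one,
    mul_add_one, Complex.exp_add]
  simp [hc]

lemma cexp_neg_two_pi_I_mul_eq_one_iff (x : ℝ) :
    cexp (-2 * π * I * x) = 1 ↔ ∃ n : ℤ, x = n := by
  rw [Complex.exp_eq_one_iff, ← (Equiv.neg ℤ).exists_congr_right]
  refine exists_congr fun n ↦ ?_
  have h : (2 * π * I : ℂ) ≠ 0 := by simp [pi_ne_zero, I_ne_zero]
  rw [← ofReal_inj, Equiv.neg_apply, Int.cast_neg, ofReal_intCast,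
    show -2 * π * I * x = -(x * (2 * π * I)) by ring, neg_mul, neg_inj, mul_left_inj' h]

lemma rhoHat_diag_eq_zero_iff (t x : ℝ) : rhoHat t (x, x) = 0 ↔ ∃ n : ℤ, n ≠ 0 ∧ x = n := by
  rw [rhoHat_diag, intervalIntegral_cexp_mul_eq_zero_iff, cexp_neg_two_pi_I_mul_eq_one_iff]
  constructor
  · rintro ⟨hx, n, rfl⟩
    exact ⟨n, by rintro rfl; simp at hx, rfl⟩
  · rintro ⟨n, hn, rfl⟩
    exact ⟨by simp [pi_ne_zero, I_ne_zero, hn], n, rfl⟩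

theorem stmt3 (t : ℝ) :
    {lam : ℝ × ℝ | rhoHat t lam = 0} ∩ {p : ℝ × ℝ | p.1 = p.2}
      = {p : ℝ × ℝ | ∃ n : ℤ, n ≠ 0 ∧ p = ((n : ℝ), (n : ℝ))} := by
  ext ⟨x, y⟩
  simp only [Set.mem_inter_iff, Set.mem_ofPred_eq, Prod.mk.injEq]
  constructor
  · rintro ⟨h, rfl⟩
    obtain ⟨n, hn, rfl⟩ := (rhoHat_diag_eq_zero_iff t x).1 h
    exact ⟨n, hn, rfl, rfl⟩
  · rintro ⟨n, hn, rfl, rfl⟩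
    exact ⟨(rhoHat_diag_eq_zero_iff t _).2 ⟨n, hn, rfl⟩, rfl⟩
end

section
/- If λ₁, λ₂, λ₁+ν, λ₂+ν are all nonintegers, ν ∈ ℤ, λ₁ ≠ λ₂, and both equations e^{πi(λ₁−λ₂)(2t+1)} sinc(λ₁) = − sinc(λ₂) and e^{πi(λ₁−λ₂)(2t+1)} sinc(λ₁+ν) = − sinc(λ₂+ν) hold, then ν = 0. -/
open Real Complex

theorem stmt4 (t lam1 lam2 : ℝ) (nu : ℤ)
    (h1 : ∀ n : ℤ, lam1 ≠ (n : ℝ)) (h2 : ∀ n : ℤ, lam2 ≠ (n : ℝ))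
    (h3 : ∀ n : ℤ, lam1 + (nu : ℝ) ≠ (n : ℝ)) (h4 : ∀ n : ℤ, lam2 + (nu : ℝ) ≠ (n : ℝ))
    (hne : lam1 ≠ lam2)
    (heq1 : Complex.exp ((π : ℂ) * Complex.I * ((lam1 : ℂ) - (lam2 : ℂ)) * (2 * (t : ℂ) + 1))
        * (_root_.sinc lam1 : ℂ) = -(_root_.sinc lam2 : ℂ))
    (heq2 : Complex.exp ((π : ℂ) * Complex.I * ((lam1 : ℂ) - (lam2 : ℂ)) * (2 * (t : ℂ) + 1))
        * (_root_.sinc (lam1 + (nu : ℝ)) : ℂ) = -(_root_.sinc (lam2 + (nu : ℝ)) : ℂ)) :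
    nu = 0 := by
  set E := Complex.exp ((π : ℂ) * Complex.I * ((lam1 : ℂ) - (lam2 : ℂ)) * (2 * (t : ℂ) + 1)) with hE
  have hEne : E ≠ 0 := Complex.exp_ne_zero _
  -- cross multiply
  have hcross : (_root_.sinc lam1 : ℂ) * (_root_.sinc (lam2 + (nu : ℝ)) : ℂ)
      = (_root_.sinc (lam1 + (nu : ℝ)) : ℂ) * (_root_.sinc lam2 : ℂ) := by
    have h : E * ((_root_.sinc lam1 : ℂ) * (_root_.sinc (lam2 + (nu : ℝ)) : ℂ))
        = E * ((_root_.sinc (lam1 + (nu : ℝ)) : ℂ) * (_root_.sinc lam2 : ℂ)) := by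
      calc E * ((_root_.sinc lam1 : ℂ) * (_root_.sinc (lam2 + (nu : ℝ)) : ℂ))
          = -(_root_.sinc lam2 : ℂ) * (_root_.sinc (lam2 + (nu : ℝ)) : ℂ) := by rw [← mul_assoc, heq1]
        _ = -(_root_.sinc (lam2 + (nu : ℝ)) : ℂ) * (_root_.sinc lam2 : ℂ) := by ring
        _ = E * ((_root_.sinc (lam1 + (nu : ℝ)) : ℂ) * (_root_.sinc lam2 : ℂ)) := by
            rw [← heq2]; ring
    exact mul_left_cancel₀ hEne h
  have hR : _root_.sinc lam1 * _root_.sinc (lam2 + (nu : ℝ)) = _root_.sinc (lam1 + (nu : ℝ)) * _root_.sinc lam2 := by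
    exact_mod_cast hcross
  -- nonzero facts
  have hpi : (π : ℝ) ≠ 0 := Real.pi_ne_zero
  have hl1 : lam1 ≠ 0 := by simpa using h1 0
  have hl2 : lam2 ≠ 0 := by simpa using h2 0
  have hl1n : lam1 + (nu : ℝ) ≠ 0 := by simpa using h3 0
  have hl2n : lam2 + (nu : ℝ) ≠ 0 := by simpa using h4 0
  have hs1 : Real.sin (π * lam1) ≠ 0 := by
    intro h
    rcases Real.sin_eq_zero_iff.1 h with ⟨n, hn⟩
    exact h1 n (mul_left_cancel₀ hpi (by linarith))
  have hs2 : Real.sin (π * lam2) ≠ 0 := by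
    intro h
    rcases Real.sin_eq_zero_iff.1 h with ⟨n, hn⟩
    exact h2 n (mul_left_cancel₀ hpi (by linarith))
  -- sin shifts
  have hshift : ∀ x : ℝ, Real.sin (π * (x + (nu : ℝ))) = (-1) ^ nu * Real.sin (π * x) := by
    intro x
    have : π * (x + (nu : ℝ)) = π * x + (nu : ℝ) * π := by ring
    rw [this, Real.sin_add_int_mul_pi]
  -- unfold _root_.sinc
  rw [_root_.sinc, _root_.sinc, _root_.sinc, _root_.sinc, if_neg hl1, if_neg hl2, if_neg hl1n, if_neg hl2n,
    hshift lam1, hshift lam2] at hR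
  have hm : ((-1 : ℝ)) ^ nu ≠ 0 := by
    apply zpow_ne_zero; norm_num
  have key : lam1 * (lam1 + (nu : ℝ)) * (lam2 * (lam2 + (nu : ℝ))) ≠ 0 := by positivity
  field_simp at hR
  have h5 : ((-1 : ℝ) ^ nu * Real.sin (π * lam1) * Real.sin (π * lam2) * (π * π))
      * ((lam1 + (nu : ℝ)) * lam2)
      = ((-1 : ℝ) ^ nu * Real.sin (π * lam1) * Real.sin (π * lam2) * (π * π))
      * (lam1 * (lam2 + (nu : ℝ))) := by
    linear_combination ((-1 : ℝ) ^ nu * Real.sin (π * lam1) * Real.sin (π * lam2) * (π * π)) * hR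
  have hfac : ((-1 : ℝ) ^ nu * Real.sin (π * lam1) * Real.sin (π * lam2) * (π * π)) ≠ 0 :=
    mul_ne_zero (mul_ne_zero (mul_ne_zero hm hs1) hs2) (mul_ne_zero hpi hpi)
  have h6 := mul_left_cancel₀ hfac h5
  have h7 : (nu : ℝ) * (lam2 - lam1) = 0 := by linear_combination h6
  have hnu : (nu : ℝ) = 0 :=
    (mul_eq_zero.1 h7).resolve_right (sub_ne_zero.2 fun h => hne h.symm)
  exact_mod_cast hnu
end

section
/- If Λ ⊆ ℤ² is a countable set such that at most one element of Λ has first coordinate 0, then the exponentials {e^{2πiλ·x} : λ ∈ Λ} do not form an orthogonal basis of L²(ρ), where ρ = μ×δ₀ + δ₀×μ and μ is half of Lebesgue measure on [t, t+1]. -/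
open MeasureTheory Real Complex
open scoped ENNReal

lemma mu_univ (t : ℝ) : mu t Set.univ = 1/2 := by
  simp [mu, Real.volume_Icc]

instance inst_s12 (t : ℝ) : IsFiniteMeasure (mu t) := by
  constructor; rw [mu_univ]; exact (by norm_num : (1/2 : ℝ≥0∞) < ⊤)

instance inst_s12_2 (t : ℝ) : IsFiniteMeasure (rho t) := by
  unfold rho; infer_instance

lemma integral_const_mu (t : ℝ) (c : ℂ) : ∫ _ : ℝ, c ∂(mu t) = c / 2 := by
  rw [integral_const, measureReal_def, mu_univ]
  norm_num
  ring

lemma integral_exp_mu (t : ℝ) (c : ℂ) (hc : c ≠ 0) (h1 : Complex.exp c = 1) :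
    ∫ x : ℝ, Complex.exp (c * x) ∂(mu t) = 0 := by
  rw [mu, integral_smul_measure]
  have : ∫ x in Set.Icc t (t+1), Complex.exp (c * x) = 0 := by
    rw [MeasureTheory.integral_Icc_eq_integral_Ioc,
      ← intervalIntegral.integral_of_le (by linarith : t ≤ t+1),
      integral_exp_mul_complex hc]
    push_cast
    rw [show c * ((t:ℂ)+1) = c * t + c by ring, Complex.exp_add, h1]
    simp
  rw [this, smul_zero]

lemma integrable_rho (t : ℝ) (g : ℝ × ℝ → ℂ) (hg : Measurable g) (C : ℝ)
    (hb : ∀ p, ‖g p‖ ≤ C) : Integrable g (rho t) :=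
  (integrable_const C).mono' hg.aestronglyMeasurable (Filter.Eventually.of_forall hb)

lemma integral_rho_split (t : ℝ) (g : ℝ × ℝ → ℂ) (hg : Measurable g) (C : ℝ)
    (hb : ∀ p, ‖g p‖ ≤ C) :
    ∫ p, g p ∂(rho t) = (∫ x, g (x, 0) ∂(mu t)) + ∫ y, g (0, y) ∂(mu t) := by
  have hint := integrable_rho t g hg C hb
  rw [rho] at hint ⊢
  rw [integral_add_measure (hint.left_of_add_measure) (hint.right_of_add_measure)]
  congr 1
  · rw [Measure.prod_dirac, integral_map (by fun_prop) hg.aestronglyMeasurable]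
  · rw [Measure.dirac_prod, integral_map (by fun_prop) hg.aestronglyMeasurable]

lemma norm_exp_one (z : ℂ) (hz : z.re = 0) : ‖Complex.exp z‖ = 1 := by
  rw [Complex.norm_exp, hz, Real.exp_zero]

lemma re_aux (s r : ℝ) : ((s : ℂ) * Complex.I * (r : ℂ)).re = 0 := by
  simp [Complex.mul_re]

lemma integral_exp_int (t : ℝ) (k : ℤ) (hk : k ≠ 0) :
    ∫ x : ℝ, Complex.exp (2 * (π : ℂ) * Complex.I * (k : ℂ) * (x : ℂ)) ∂(mu t) = 0 := by
  have hc : (2 * (π : ℂ) * Complex.I * (k : ℂ)) ≠ 0 := by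
    simp [Complex.ofReal_ne_zero, Real.pi_ne_zero, Complex.I_ne_zero, hk]
  have h1 : Complex.exp (2 * (π : ℂ) * Complex.I * (k : ℂ)) = 1 := by
    rw [show (2 * (π : ℂ) * Complex.I * (k : ℂ)) = (k : ℂ) * (2 * π * Complex.I) by ring]
    exact Complex.exp_int_mul_two_pi_mul_I k
  exact integral_exp_mu t _ hc h1

lemma mu_singleton_zero (t : ℝ) : mu t {0} = 0 := by
  have h : volume (({0} : Set ℝ) ∩ Set.Icc t (t + 1)) = 0 :=
    measure_mono_null Set.inter_subset_left (Real.volume_singleton)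
  simp [mu, Measure.smul_apply, Measure.restrict_apply (measurableSet_singleton _), h]

lemma mu_ae_ne_zero (t : ℝ) : ∀ᵐ y ∂(mu t), y ≠ 0 := by
  rw [ae_iff]
  convert mu_singleton_zero t using 2
  simp

instance mu_ae_neBot (t : ℝ) : (MeasureTheory.ae (mu t)).NeBot := by
  rw [ae_neBot]
  intro h
  have := mu_univ t
  rw [h] at this
  simp at this
  exact (ENNReal.inv_ne_zero.mpr (by simp)) this.symm

lemma meas_ind : Measurable (fun p : ℝ × ℝ => if p.2 = 0 then (1 : ℂ) else 0) :=
  Measurable.ite (measurable_snd (measurableSet_singleton 0)) measurable_const measurable_const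

lemma integral_ind_mul (t : ℝ) (e : ℝ × ℝ → ℂ) (he : Measurable e)
    (hne : ∀ p, ‖e p‖ = 1) :
    ∫ p, (if p.2 = 0 then (1 : ℂ) else 0) * e p ∂(rho t) = ∫ x, e (x, 0) ∂(mu t) := by
  have hb : ∀ p : ℝ × ℝ, ‖(if p.2 = 0 then (1 : ℂ) else 0) * e p‖ ≤ 1 := by
    intro p
    rw [norm_mul, hne, mul_one]
    split <;> simp
  rw [integral_rho_split t (fun p => (if p.2 = 0 then (1 : ℂ) else 0) * e p) (meas_ind.mul he) 1 hb]
  have h1 : ∀ x : ℝ, (if ((x, (0:ℝ)).2 = 0) then (1 : ℂ) else 0) * e (x, 0) = e (x, 0) := by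
    intro x; simp
  have h2 : ∫ y, (if ((((0:ℝ), y) : ℝ × ℝ).2 = 0) then (1 : ℂ) else 0) * e (0, y) ∂(mu t) = 0 := by
    apply integral_eq_zero_of_ae
    filter_upwards [mu_ae_ne_zero t] with y hy
    simp [hy]
  simp only [h2, add_zero]
  simp

lemma e_meas (a b : ℝ) : Measurable (fun p : ℝ × ℝ =>
    Complex.exp (-2 * (π : ℂ) * Complex.I * ((a * p.1 + b * p.2 : ℝ) : ℂ))) := by
  fun_prop

lemma e_norm (a b : ℝ) (p : ℝ × ℝ) :
    ‖Complex.exp (-2 * (π : ℂ) * Complex.I * ((a * p.1 + b * p.2 : ℝ) : ℂ))‖ = 1 :=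
  norm_exp_one _ (by simp)

lemma rho_const (t : ℝ) : ∫ _ : ℝ × ℝ, (1 : ℂ) ∂(rho t) = 1 := by
  rw [integral_rho_split t _ measurable_const 1 (by intro _; norm_num), integral_const_mu]
  norm_num

lemma key_ind (t : ℝ) (a b : ℝ) (m : ℤ) (ha : a = m) (hm : m ≠ 0) :
    ∫ p : ℝ × ℝ, (if p.2 = 0 then (1 : ℂ) else 0) *
      Complex.exp (-2 * (π : ℂ) * Complex.I * ((a * p.1 + b * p.2 : ℝ) : ℂ)) ∂(rho t) = 0 := by
  rw [integral_ind_mul t _ (e_meas a b) (e_norm a b)]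
  have h : (fun x : ℝ => Complex.exp (-2 * (π : ℂ) * Complex.I * ((a * x + b * 0 : ℝ) : ℂ)))
      = fun x : ℝ => Complex.exp (2 * (π : ℂ) * Complex.I * ((-m : ℤ) : ℂ) * (x : ℂ)) := by
    funext x
    congr 1
    rw [ha]
    push_cast
    ring
  rw [h]
  exact integral_exp_int t (-m) (neg_ne_zero.mpr hm)

lemma key_ind_zero (t : ℝ) (a b : ℝ) (ha : a = 0) :
    ∫ p : ℝ × ℝ, (if p.2 = 0 then (1 : ℂ) else 0) *
      Complex.exp (-2 * (π : ℂ) * Complex.I * ((a * p.1 + b * p.2 : ℝ) : ℂ)) ∂(rho t) = 1/2 := by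
  rw [integral_ind_mul t _ (e_meas a b) (e_norm a b)]
  have h : (fun x : ℝ => Complex.exp (-2 * (π : ℂ) * Complex.I * ((a * x + b * 0 : ℝ) : ℂ)))
      = fun _ : ℝ => (1 : ℂ) := by
    funext x
    rw [ha]
    norm_num
  rw [h, integral_const_mu]

def IsSpectrum1 (ν : Measure ℝ) (Λ : Set ℝ) : Prop :=
  Λ.Countable ∧
  (∀ γ₁ ∈ Λ, ∀ γ₂ ∈ Λ, γ₁ ≠ γ₂ →
    ∫ x, Complex.exp (2 * (π : ℂ) * Complex.I * (((γ₁ - γ₂) * x : ℝ) : ℂ)) ∂ν = 0) ∧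
  (∀ f : ℝ → ℂ, MemLp f 2 ν →
    (∀ γ ∈ Λ, ∫ x, f x * Complex.exp (-2 * (π : ℂ) * Complex.I * ((γ * x : ℝ) : ℂ)) ∂ν = 0) →
    f =ᵐ[ν] 0)

def IsSpectrum2 (ν : Measure (ℝ × ℝ)) (Λ : Set (ℝ × ℝ)) : Prop :=
  Λ.Countable ∧
  (∀ γ₁ ∈ Λ, ∀ γ₂ ∈ Λ, γ₁ ≠ γ₂ →
    ∫ x, Complex.exp (2 * (π : ℂ) * Complex.I *
      (((γ₁.1 - γ₂.1) * x.1 + (γ₁.2 - γ₂.2) * x.2 : ℝ) : ℂ)) ∂ν = 0) ∧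
  (∀ f : ℝ × ℝ → ℂ, MemLp f 2 ν →
    (∀ γ ∈ Λ, ∫ x, f x * Complex.exp (-2 * (π : ℂ) * Complex.I *
      ((γ.1 * x.1 + γ.2 * x.2 : ℝ) : ℂ)) ∂ν = 0) →
    f =ᵐ[ν] 0)

theorem stmt12 (t : ℝ) (Λ : Set (ℝ × ℝ)) (hcount : Λ.Countable)
    (hint : ∀ p ∈ Λ, ∃ m n : ℤ, p = ((m : ℝ), (n : ℝ)))
    (hone : Set.Subsingleton {p : ℝ × ℝ | p ∈ Λ ∧ p.1 = 0}) :
    ¬ IsSpectrum2 (rho t) Λ := by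
  rintro ⟨-, horth, hcomp⟩
  by_cases hzero : ∃ q ∈ Λ, q.1 = 0
  · -- Case B: a unique element q with first coordinate 0
    obtain ⟨q, hqΛ, hq1⟩ := hzero
    set E : ℝ × ℝ → ℂ := fun p =>
      Complex.exp (2 * (π : ℂ) * Complex.I * ((q.1 * p.1 + q.2 * p.2 : ℝ) : ℂ)) with hE_def
    have hEmeas : Measurable E := by rw [hE_def]; fun_prop
    have hEnorm : ∀ p, ‖E p‖ = 1 := by
      intro p; rw [hE_def]; exact norm_exp_one _ (by simp)
    set f : ℝ × ℝ → ℂ := fun p => (if p.2 = 0 then (1 : ℂ) else 0) - (1/2 : ℂ) * E p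
      with hf_def
    have hfmeas : Measurable f := meas_ind.sub (measurable_const.mul hEmeas)
    have hfbound : ∀ p, ‖f p‖ ≤ 2 := by
      intro p
      calc ‖f p‖ ≤ ‖(if p.2 = 0 then (1 : ℂ) else 0)‖ + ‖(1/2 : ℂ) * E p‖ := norm_sub_le _ _
        _ ≤ 2 := by rw [norm_mul, hEnorm, mul_one]; split <;> norm_num
    have hmem : MemLp f 2 (rho t) :=
      MemLp.of_bound hfmeas.aestronglyMeasurable 2 (Filter.Eventually.of_forall hfbound)
    have key : ∀ γ ∈ Λ, ∫ p, f p * Complex.exp (-2 * (π : ℂ) * Complex.I *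
        ((γ.1 * p.1 + γ.2 * p.2 : ℝ) : ℂ)) ∂(rho t) = 0 := by
      intro γ hγ
      have hsplit : (fun p : ℝ × ℝ => f p * Complex.exp (-2 * (π : ℂ) * Complex.I *
            ((γ.1 * p.1 + γ.2 * p.2 : ℝ) : ℂ)))
          = fun p : ℝ × ℝ => ((if p.2 = 0 then (1 : ℂ) else 0) *
              Complex.exp (-2 * (π : ℂ) * Complex.I * ((γ.1 * p.1 + γ.2 * p.2 : ℝ) : ℂ)))
            - (1/2 : ℂ) * (E p * Complex.exp (-2 * (π : ℂ) * Complex.I *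
              ((γ.1 * p.1 + γ.2 * p.2 : ℝ) : ℂ))) := by
        funext p; rw [hf_def]; ring
      have hint1 : Integrable (fun p : ℝ × ℝ => (if p.2 = 0 then (1 : ℂ) else 0) *
          Complex.exp (-2 * (π : ℂ) * Complex.I * ((γ.1 * p.1 + γ.2 * p.2 : ℝ) : ℂ))) (rho t) := by
        apply integrable_rho t _ (meas_ind.mul (e_meas γ.1 γ.2)) 1
        intro p; simp only [Pi.mul_apply]; rw [norm_mul, e_norm, mul_one]; split <;> norm_num
      have hint2 : Integrable (fun p : ℝ × ℝ => (1/2 : ℂ) * (E p *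
          Complex.exp (-2 * (π : ℂ) * Complex.I * ((γ.1 * p.1 + γ.2 * p.2 : ℝ) : ℂ)))) (rho t) := by
        apply integrable_rho t _ (measurable_const.mul (hEmeas.mul (e_meas γ.1 γ.2))) 1
        intro p; simp only [Pi.mul_apply]; rw [norm_mul, norm_mul, hEnorm, e_norm]; norm_num
      rw [hsplit, integral_sub hint1 hint2, integral_const_mul]
      by_cases hγq : γ = q
      · subst hγq
        have h2 : ∫ p, E p * Complex.exp (-2 * (π : ℂ) * Complex.I *
            ((γ.1 * p.1 + γ.2 * p.2 : ℝ) : ℂ)) ∂(rho t) = 1 := by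
          have h : (fun p : ℝ × ℝ => E p * Complex.exp (-2 * (π : ℂ) * Complex.I *
              ((γ.1 * p.1 + γ.2 * p.2 : ℝ) : ℂ))) = fun _ => (1 : ℂ) := by
            funext p
            rw [hE_def, ← Complex.exp_add, show (2 * (π : ℂ) * Complex.I *
              ((γ.1 * p.1 + γ.2 * p.2 : ℝ) : ℂ) + -2 * (π : ℂ) * Complex.I *
              ((γ.1 * p.1 + γ.2 * p.2 : ℝ) : ℂ)) = 0 by ring, Complex.exp_zero]
          rw [h, rho_const]
        rw [key_ind_zero t γ.1 γ.2 hq1, h2]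
        norm_num
      · obtain ⟨m, n, hmn⟩ := hint γ hγ
        have hm0 : γ.1 ≠ 0 := fun h0 => hγq (hone ⟨hγ, h0⟩ ⟨hqΛ, hq1⟩)
        have hm : m ≠ 0 := by
          intro h; apply hm0; rw [hmn, h]; simp
        have h2 : ∫ p, E p * Complex.exp (-2 * (π : ℂ) * Complex.I *
            ((γ.1 * p.1 + γ.2 * p.2 : ℝ) : ℂ)) ∂(rho t) = 0 := by
          have h : (fun p : ℝ × ℝ => E p * Complex.exp (-2 * (π : ℂ) * Complex.I *
              ((γ.1 * p.1 + γ.2 * p.2 : ℝ) : ℂ)))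
              = fun p : ℝ × ℝ => Complex.exp (2 * (π : ℂ) * Complex.I *
                (((q.1 - γ.1) * p.1 + (q.2 - γ.2) * p.2 : ℝ) : ℂ)) := by
            funext p
            rw [hE_def, ← Complex.exp_add]
            congr 1
            push_cast
            ring
          rw [h]
          exact horth q hqΛ γ hγ (Ne.symm hγq)
        rw [key_ind t γ.1 γ.2 m (by rw [hmn]) hm, h2]
        norm_num
    have haezero := hcomp f hmem key
    have hv : f =ᵐ[(Measure.dirac 0).prod (mu t)] 0 :=
      haezero.filter_mono (ae_mono (Measure.le_add_left le_rfl))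
    rw [Measure.dirac_prod] at hv
    have hv2 : ∀ᵐ p ∂(Measure.map (Prod.mk (0:ℝ)) (mu t)), f p = 0 := hv
    have hv' : ∀ᵐ y ∂(mu t), f (0, y) = 0 :=
      ae_of_ae_map (measurable_prodMk_left).aemeasurable hv2
    obtain ⟨y, hy⟩ := hv'.exists
    have hne : f (0, y) ≠ 0 := by
      by_cases hy0 : y = 0
      · subst hy0
        rw [hf_def]
        norm_num [hE_def]
      · rw [hf_def]
        simp only [if_neg hy0, zero_sub, neg_ne_zero]
        exact mul_ne_zero (by norm_num) (Complex.exp_ne_zero _)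
    exact hne hy
  · -- Case A: no element with first coordinate 0
    push_neg at hzero
    set f : ℝ × ℝ → ℂ := fun p => (if p.2 = 0 then (1 : ℂ) else 0) with hf_def
    have hmem : MemLp f 2 (rho t) :=
      MemLp.of_bound meas_ind.aestronglyMeasurable 1
        (Filter.Eventually.of_forall (by intro p; simp only [hf_def]; split <;> norm_num))
    have key : ∀ γ ∈ Λ, ∫ p, f p * Complex.exp (-2 * (π : ℂ) * Complex.I *
        ((γ.1 * p.1 + γ.2 * p.2 : ℝ) : ℂ)) ∂(rho t) = 0 := by
      intro γ hγ
      obtain ⟨m, n, hmn⟩ := hint γ hγ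
      have hm0 : γ.1 ≠ 0 := hzero γ hγ
      have hm : m ≠ 0 := by
        intro h; apply hm0; rw [hmn, h]; simp
      exact key_ind t γ.1 γ.2 m (by rw [hmn]) hm
    have haezero := hcomp f hmem key
    have hv : f =ᵐ[(mu t).prod (Measure.dirac 0)] 0 :=
      haezero.filter_mono (ae_mono (Measure.le_add_right le_rfl))
    rw [Measure.prod_dirac] at hv
    have hv2 : ∀ᵐ p ∂(Measure.map (fun x : ℝ => (x, (0:ℝ))) (mu t)), f p = 0 := hv
    have hv' : ∀ᵐ x ∂(mu t), f (x, 0) = 0 :=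
      ae_of_ae_map (by fun_prop) hv2
    obtain ⟨x, hx⟩ := hv'.exists
    rw [hf_def] at hx
    simp at hx
end

section
/- If Λ is a spectrum of ρ then the function x ↦ ∑_{λ∈Λ} |F(x − λ₁)|², where F(ξ) = sin(πξ)/(πξ) is the Fourier transform of the indicator of [−1/2, 1/2] and λ₁ ranges over first coordinates of points of Λ (with multiplicity), is identically equal to 2 on ℝ. -/
open MeasureTheory Real Complex
open scoped ENNReal

namespace Stmt15Aux

open scoped InnerProductSpace ComplexConjugate

lemma mu_univ (t : ℝ) : mu t Set.univ = 1/2 := by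
  simp [mu, Real.volume_Icc]

instance (t : ℝ) : IsFiniteMeasure (mu t) :=
  ⟨by rw [mu_univ]; exact ENNReal.div_lt_top ENNReal.one_ne_top two_ne_zero⟩

lemma mu_real_univ (t : ℝ) : (mu t Set.univ).toReal = 1/2 := by
  rw [mu_univ]; simp

lemma mu_singleton (t : ℝ) : mu t {0} = 0 := by
  simp [mu, Measure.restrict_apply (MeasurableSet.singleton 0)]

lemma ae_ne_zero (t : ℝ) : ∀ᵐ s ∂(mu t), s ≠ 0 := by
  rw [ae_iff]
  convert mu_singleton t using 2
  simp

instance (t : ℝ) : IsProbabilityMeasure (rho t) := by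
  constructor
  rw [rho, Measure.prod_dirac, Measure.dirac_prod, Measure.add_apply,
    Measure.map_apply (by measurability) MeasurableSet.univ,
    Measure.map_apply (by measurability) MeasurableSet.univ]
  simp only [Set.preimage_univ, mu_univ]
  rw [ENNReal.div_add_div_same, one_add_one_eq_two, ENNReal.div_self two_ne_zero ENNReal.ofNat_ne_top]

/-- the exponential with frequency γ -/
noncomputable def ef (γ : ℝ × ℝ) : ℝ × ℝ → ℂ :=
  fun u => Complex.exp (2 * (π:ℂ) * Complex.I * ((γ.1 * u.1 + γ.2 * u.2 : ℝ) : ℂ))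

/-- the test function -/
noncomputable def F (x : ℝ) : ℝ × ℝ → ℂ :=
  fun u => if u.2 = 0 then Complex.exp (2 * (π:ℂ) * Complex.I * ((x * u.1 : ℝ) : ℂ)) else 0

lemma norm_exp (r : ℝ) : ‖Complex.exp (2 * (π:ℂ) * Complex.I * (r : ℂ))‖ = 1 := by
  rw [Complex.norm_exp]
  have : (2 * (π:ℂ) * Complex.I * (r : ℂ)).re = 0 := by simp
  rw [this, Real.exp_zero]

lemma conj_exp (r : ℝ) : conj (Complex.exp (2 * (π:ℂ) * Complex.I * (r : ℂ)))
    = Complex.exp (2 * (π:ℂ) * Complex.I * ((-r : ℝ) : ℂ)) := by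
  rw [← Complex.exp_conj]
  congr 1
  simp only [map_mul, Complex.conj_I, Complex.conj_ofReal, Complex.ofReal_neg, map_ofNat]
  ring

lemma exp_mul_exp (r r' : ℝ) :
    Complex.exp (2 * (π:ℂ) * Complex.I * (r : ℂ)) * Complex.exp (2 * (π:ℂ) * Complex.I * (r' : ℂ))
    = Complex.exp (2 * (π:ℂ) * Complex.I * ((r + r' : ℝ) : ℂ)) := by
  rw [← Complex.exp_add]
  congr 1
  push_cast
  ring

lemma ef_measurable (γ : ℝ × ℝ) : Measurable (ef γ) := by
  apply Continuous.measurable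
  unfold ef
  fun_prop

lemma ef_norm (γ : ℝ × ℝ) (u : ℝ × ℝ) : ‖ef γ u‖ = 1 := norm_exp _

lemma F_measurable (x : ℝ) : Measurable (F x) := by
  unfold F
  apply Measurable.ite
  · exact (isClosed_eq continuous_snd continuous_const).measurableSet
  · apply Continuous.measurable; fun_prop
  · exact measurable_const

lemma F_norm (x : ℝ) (u : ℝ × ℝ) : ‖F x u‖ ≤ 1 := by
  unfold F
  split
  · exact le_of_eq (norm_exp _)
  · simp

lemma integrable_bdd {α : Type*} [MeasurableSpace α] {ν : Measure α} [IsFiniteMeasure ν]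
    {g : α → ℂ} (hg : Measurable g) (C : ℝ) (hC : ∀ u, ‖g u‖ ≤ C) : Integrable g ν :=
  (integrable_const C).mono' hg.aestronglyMeasurable (Filter.Eventually.of_forall hC)

lemma memLp_bdd {α : Type*} [MeasurableSpace α] {ν : Measure α} [IsFiniteMeasure ν]
    {g : α → ℂ} (hg : Measurable g) (C : ℝ) (hC : ∀ u, ‖g u‖ ≤ C) : MemLp g 2 ν :=
  MemLp.of_bound hg.aestronglyMeasurable C (Filter.Eventually.of_forall hC)

lemma integral_rho (t : ℝ) (g : ℝ × ℝ → ℂ) (hg : Measurable g) (C : ℝ) (hC : ∀ u, ‖g u‖ ≤ C) :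
    ∫ u, g u ∂(rho t) = (∫ s, g (s, 0) ∂(mu t)) + ∫ s, g (0, s) ∂(mu t) := by
  have hm1 : Measurable (fun s : ℝ => (s, (0:ℝ))) := by measurability
  have hm2 : Measurable (fun s : ℝ => ((0:ℝ), s)) := by measurability
  rw [rho, Measure.prod_dirac, Measure.dirac_prod]
  rw [integral_add_measure]
  · rw [integral_map hm1.aemeasurable hg.aestronglyMeasurable,
        integral_map hm2.aemeasurable hg.aestronglyMeasurable]
  · rw [integrable_map_measure hg.aestronglyMeasurable hm1.aemeasurable]
    exact integrable_bdd (hg.comp hm1) C (fun s => hC _)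
  · rw [integrable_map_measure hg.aestronglyMeasurable hm2.aemeasurable]
    exact integrable_bdd (hg.comp hm2) C (fun s => hC _)

/-- the one-dimensional exponential integral against μ -/
noncomputable def J (t a : ℝ) : ℂ :=
  ∫ s, Complex.exp (2 * (π:ℂ) * Complex.I * ((a * s : ℝ) : ℂ)) ∂(mu t)

lemma J_norm_sq (t a : ℝ) : ‖J t a‖ ^ 2 = _root_.sinc a ^ 2 / 4 := by
  have hint : ∀ b : ℝ, ∫ s, Complex.exp (2 * (π:ℂ) * Complex.I * ((b * s : ℝ) : ℂ))
      ∂(volume.restrict (Set.Icc t (t+1)))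
      = ∫ s in t..(t+1), Complex.exp ((2 * (π:ℂ) * Complex.I * b) * (s:ℂ)) := by
    intro b
    simp_rw [Complex.ofReal_mul, ← mul_assoc]
    rw [MeasureTheory.integral_Icc_eq_integral_Ioc,
      ← intervalIntegral.integral_of_le (by linarith : t ≤ t + 1)]
  have hJ : J t a = (1/2 : ℝ) • ∫ s in t..(t+1),
      Complex.exp ((2 * (π:ℂ) * Complex.I * a) * (s:ℂ)) := by
    rw [J, mu, integral_smul_measure, ← hint a]
    congr 1
    simp [ENNReal.toReal_div]
  by_cases ha : a = 0
  · subst ha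
    rw [hJ]
    norm_num [_root_.sinc]
  · have hc : (2 * (π:ℂ) * Complex.I * (a:ℂ)) ≠ 0 := by
      apply mul_ne_zero
      · simp [Real.pi_ne_zero, Complex.I_ne_zero]
      · exact Complex.ofReal_ne_zero.mpr ha
    rw [hJ, integral_exp_mul_complex hc]
    have hfact : Complex.exp (2*(π:ℂ)*Complex.I*(a:ℂ) * ((t+1:ℝ):ℂ))
          - Complex.exp (2*(π:ℂ)*Complex.I*(a:ℂ) * ((t:ℝ):ℂ))
        = Complex.exp (2*(π:ℂ)*Complex.I*((a*t:ℝ):ℂ))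
          * (Complex.exp (((2*π*a:ℝ):ℂ) * Complex.I) - 1) := by
      rw [mul_sub, mul_one, ← Complex.exp_add]
      congr 2 <;> (push_cast; ring)
    have hw : ‖Complex.exp (((2*π*a:ℝ):ℂ) * Complex.I) - 1‖^2 = 4 * Real.sin (π*a)^2 := by
      rw [Complex.exp_mul_I, ← Complex.ofReal_cos, ← Complex.ofReal_sin,
        Complex.sq_norm, Complex.normSq_apply]
      have h1 : Real.cos (2*π*a) = 2 * Real.cos (π*a)^2 - 1 := by
        rw [show (2:ℝ)*π*a = 2*(π*a) by ring, Real.cos_two_mul]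
      have h2 : Real.sin (2*π*a) = 2 * Real.sin (π*a) * Real.cos (π*a) := by
        rw [show (2:ℝ)*π*a = 2*(π*a) by ring, Real.sin_two_mul]
      have h3 := Real.sin_sq_add_cos_sq (π*a)
      simp only [Complex.sub_re, Complex.add_re, Complex.ofReal_re, Complex.mul_re,
        Complex.I_re, Complex.I_im, Complex.ofReal_im, Complex.sub_im, Complex.add_im,
        Complex.mul_im, Complex.one_re, Complex.one_im]
      rw [h1, h2]
      linear_combination (4*Real.cos (π*a)^2 - 4) * h3
    have hcnorm : ‖(2*(π:ℂ)*Complex.I*(a:ℂ))‖^2 = 4*π^2*a^2 := by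
      simp only [norm_mul, Complex.norm_I, Complex.norm_real, Real.norm_eq_abs,
        Complex.norm_two, mul_one]
      rw [mul_pow, mul_pow, _root_.sq_abs, _root_.sq_abs]
      norm_num
    rw [hfact, norm_smul]
    have h12 : ‖(1/2:ℝ)‖ = 1/2 := by rw [Real.norm_eq_abs]; norm_num
    rw [h12, norm_div, norm_mul, norm_exp (a*t), one_mul, mul_pow,
      show ((1:ℝ)/2)^2 = 1/4 by norm_num, div_pow, hw, hcnorm, _root_.sinc, if_neg ha, div_pow]
    have hπa : π * a ≠ 0 := mul_ne_zero Real.pi_ne_zero ha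
    field_simp

lemma conj_ef_mul (γ δ : ℝ × ℝ) (u : ℝ × ℝ) :
    conj (ef γ u) * ef δ u = ef (δ - γ) u := by
  simp only [ef]
  rw [conj_exp, exp_mul_exp]
  rw [show -(γ.1 * u.1 + γ.2 * u.2) + (δ.1 * u.1 + δ.2 * u.2)
      = (δ - γ).1 * u.1 + (δ - γ).2 * u.2 by simp [Prod.fst_sub, Prod.snd_sub]; ring]

lemma conj_exp_mul_self (r : ℝ) :
    conj (Complex.exp (2 * (π:ℂ) * Complex.I * (r : ℂ)))
      * Complex.exp (2 * (π:ℂ) * Complex.I * (r : ℂ)) = 1 := by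
  rw [conj_exp, exp_mul_exp]
  simp

noncomputable def eL (t : ℝ) (γ : ℝ × ℝ) : Lp ℂ 2 (rho t) :=
  (memLp_bdd (ef_measurable γ) 1 (fun u => le_of_eq (ef_norm γ u))).toLp (ef γ)

lemma eL_coe (t : ℝ) (γ : ℝ × ℝ) : ⇑(eL t γ) =ᵐ[rho t] ef γ :=
  MemLp.coeFn_toLp _

lemma inner_eL (t : ℝ) (γ : ℝ × ℝ) (g : Lp ℂ 2 (rho t)) :
    ⟪eL t γ, g⟫_ℂ = ∫ u, conj (ef γ u) * g u ∂(rho t) := by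
  rw [MeasureTheory.L2.inner_def]
  apply integral_congr_ae
  filter_upwards [eL_coe t γ] with u h1
  rw [h1, RCLike.inner_apply, mul_comm]

lemma inner_eL_eL (t : ℝ) (γ δ : ℝ × ℝ) :
    ⟪eL t γ, eL t δ⟫_ℂ = ∫ u, ef (δ - γ) u ∂(rho t) := by
  rw [inner_eL]
  apply integral_congr_ae
  filter_upwards [eL_coe t δ] with u h1
  rw [h1, conj_ef_mul]

lemma orthonormal_eL (t : ℝ) (Λ : Set (ℝ × ℝ)) (hΛ : IsSpectrum2 (rho t) Λ) :
    Orthonormal ℂ (fun γ : Λ => eL t γ.1) := by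
  rw [orthonormal_iff_ite]
  intro i j
  rw [inner_eL_eL]
  by_cases h : i = j
  · subst h
    rw [if_pos rfl, sub_self]
    have h1 : ∀ u : ℝ × ℝ, ef (0 : ℝ × ℝ) u = 1 := by
      intro u; simp [ef]
    simp only [h1]
    simp
  · rw [if_neg h]
    have hne : (j : ℝ × ℝ) ≠ (i : ℝ × ℝ) := fun hh => h (Subtype.ext hh).symm
    have h0 := hΛ.2.1 j.1 j.2 i.1 i.2 hne
    rw [← h0]
    apply integral_congr_ae
    apply Filter.Eventually.of_forall
    intro u
    simp [ef, Prod.fst_sub, Prod.snd_sub]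

lemma span_eL_bot (t : ℝ) (Λ : Set (ℝ × ℝ)) (hΛ : IsSpectrum2 (rho t) Λ) :
    (Submodule.span ℂ (Set.range (fun γ : Λ => eL t γ.1)))ᗮ = ⊥ := by
  rw [Submodule.eq_bot_iff]
  intro g hg
  have key : ∀ γ ∈ Λ, ∫ u : ℝ × ℝ, (g : ℝ × ℝ → ℂ) u * Complex.exp (-2 * (π:ℂ) * Complex.I *
      ((γ.1 * u.1 + γ.2 * u.2 : ℝ) : ℂ)) ∂(rho t) = 0 := by
    intro γ hγ
    have h0 : ⟪eL t γ, g⟫_ℂ = 0 :=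
      (Submodule.mem_orthogonal _ _).mp hg _ (Submodule.subset_span ⟨⟨γ, hγ⟩, rfl⟩)
    rw [inner_eL] at h0
    rw [← h0]
    apply integral_congr_ae
    apply Filter.Eventually.of_forall
    intro u
    simp only [ef]
    rw [conj_exp, mul_comm]
    congr 2
    push_cast
    ring
  have hae := hΛ.2.2 g (MeasureTheory.Lp.memLp g) key
  exact (MeasureTheory.Lp.eq_zero_iff_ae_eq_zero).mpr hae

lemma F_memLp (t x : ℝ) : MemLp (F x) 2 (rho t) := memLp_bdd (F_measurable x) 1 (F_norm x)

lemma inner_eL_F (t x : ℝ) (γ : ℝ × ℝ) :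
    ⟪eL t γ, (F_memLp t x).toLp (F x)⟫_ℂ = J t (x - γ.1) := by
  rw [inner_eL]
  have h1 : (∫ u, conj (ef γ u) * ((F_memLp t x).toLp (F x)) u ∂(rho t))
      = ∫ u, conj (ef γ u) * F x u ∂(rho t) := by
    apply integral_congr_ae
    filter_upwards [(F_memLp t x).coeFn_toLp] with u hu
    rw [hu]
  rw [h1]
  have hmeas : Measurable (fun u => conj (ef γ u) * F x u) :=
    ((Complex.continuous_conj.measurable).comp (ef_measurable γ)).mul (F_measurable x)
  have hbd : ∀ u, ‖conj (ef γ u) * F x u‖ ≤ 1 := by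
    intro u
    rw [norm_mul, RCLike.norm_conj, ef_norm, one_mul]
    exact F_norm x u
  rw [integral_rho t _ hmeas 1 hbd]
  have h2 : (∫ s, conj (ef γ (s,0)) * F x (s,0) ∂(mu t)) = J t (x - γ.1) := by
    rw [J]
    apply integral_congr_ae
    apply Filter.Eventually.of_forall
    intro s
    simp only [ef, F, if_true]
    rw [conj_exp, exp_mul_exp,
      show -(γ.1 * s + γ.2 * 0) + x * s = (x - γ.1) * s by ring]
  have h3 : (∫ s, conj (ef γ (0,s)) * F x (0,s) ∂(mu t)) = 0 := by
    have h0 : (fun s : ℝ => conj (ef γ (0,s)) * F x (0,s)) =ᵐ[mu t] fun _ => (0:ℂ) := by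
      filter_upwards [ae_ne_zero t] with s hs
      simp only [F]
      rw [if_neg hs, mul_zero]
    rw [integral_congr_ae h0, integral_zero]
  rw [h2, h3, add_zero]

lemma inner_F_F (t x : ℝ) :
    ⟪(F_memLp t x).toLp (F x), (F_memLp t x).toLp (F x)⟫_ℂ = ((1/2:ℝ):ℂ) := by
  rw [MeasureTheory.L2.inner_def]
  have h1 : (∫ u, ⟪((F_memLp t x).toLp (F x)) u, ((F_memLp t x).toLp (F x)) u⟫_ℂ ∂(rho t))
      = ∫ u, conj (F x u) * F x u ∂(rho t) := by
    apply integral_congr_ae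
    filter_upwards [(F_memLp t x).coeFn_toLp] with u hu
    rw [hu, RCLike.inner_apply, mul_comm]
  rw [h1]
  have hmeas : Measurable (fun u => conj (F x u) * F x u) :=
    ((Complex.continuous_conj.measurable).comp (F_measurable x)).mul (F_measurable x)
  have hbd : ∀ u, ‖conj (F x u) * F x u‖ ≤ 1 := by
    intro u
    rw [norm_mul, RCLike.norm_conj]
    exact mul_le_one₀ (F_norm x u) (norm_nonneg _) (F_norm x u)
  rw [integral_rho t _ hmeas 1 hbd]
  have h2 : (∫ s, conj (F x (s,0)) * F x (s,0) ∂(mu t)) = ((1/2:ℝ):ℂ) := by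
    have hpt : ∀ s : ℝ, conj (F x (s,0)) * F x (s,0) = 1 := by
      intro s
      simp only [F, if_true]
      exact conj_exp_mul_self _
    simp only [hpt]
    rw [integral_const, measureReal_def, mu_real_univ]
    simp [Complex.real_smul]
  have h3 : (∫ s, conj (F x (0,s)) * F x (0,s) ∂(mu t)) = 0 := by
    have h0 : (fun s : ℝ => conj (F x (0,s)) * F x (0,s)) =ᵐ[mu t] fun _ => (0:ℂ) := by
      filter_upwards [ae_ne_zero t] with s hs
      simp only [F]
      rw [if_neg hs, mul_zero]
    rw [integral_congr_ae h0, integral_zero]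
  rw [h2, h3, add_zero]

end Stmt15Aux

open scoped InnerProductSpace ComplexConjugate

theorem stmt15 (t : ℝ) (Λ : Set (ℝ × ℝ)) (hΛ : IsSpectrum2 (rho t) Λ) :
    ∀ x : ℝ, ∑' lam : Λ, (_root_.sinc (x - (lam : ℝ × ℝ).1)) ^ 2 = 2 := by
  intro x
  have hon := Stmt15Aux.orthonormal_eL t Λ hΛ
  have hsp := Stmt15Aux.span_eL_bot t Λ hΛ
  have hsum := (HilbertBasis.mkOfOrthogonalEqBot hon hsp).hasSum_inner_mul_inner
    ((Stmt15Aux.F_memLp t x).toLp (Stmt15Aux.F x)) ((Stmt15Aux.F_memLp t x).toLp (Stmt15Aux.F x))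
  rw [HilbertBasis.coe_mkOfOrthogonalEqBot hon hsp] at hsum
  have hterm : ∀ γ : Λ, ⟪(Stmt15Aux.F_memLp t x).toLp (Stmt15Aux.F x), Stmt15Aux.eL t γ.1⟫_ℂ
      * ⟪Stmt15Aux.eL t γ.1, (Stmt15Aux.F_memLp t x).toLp (Stmt15Aux.F x)⟫_ℂ
      = ((_root_.sinc (x - (γ : ℝ × ℝ).1) ^ 2 / 4 : ℝ) : ℂ) := by
    intro γ
    rw [show ⟪(Stmt15Aux.F_memLp t x).toLp (Stmt15Aux.F x), Stmt15Aux.eL t γ.1⟫_ℂ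
        = conj ⟪Stmt15Aux.eL t γ.1, (Stmt15Aux.F_memLp t x).toLp (Stmt15Aux.F x)⟫_ℂ from
        (inner_conj_symm _ _).symm]
    rw [mul_comm, Complex.mul_conj, Stmt15Aux.inner_eL_F,
      Complex.normSq_eq_norm_sq, Stmt15Aux.J_norm_sq]
  simp only [hterm, Stmt15Aux.inner_F_F] at hsum
  have hr : HasSum (fun γ : Λ => _root_.sinc (x - (γ : ℝ × ℝ).1) ^ 2 / 4) (1/2 : ℝ) :=
    Complex.hasSum_ofReal.mp hsum
  have h4 := hr.mul_left 4
  rw [show (fun γ : Λ => 4 * (_root_.sinc (x - (γ : ℝ × ℝ).1) ^ 2 / 4))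
      = fun γ : Λ => _root_.sinc (x - (γ : ℝ × ℝ).1) ^ 2 from funext fun γ => by ring,
    show (4:ℝ) * (1/2) = 2 by norm_num] at h4
  exact h4.tsum_eq
end

section
/- Let Λ₁ ⊆ ℝ be a discrete set such that ∑_{λ∈Λ₁} |sinc(x−λ)|² = 2 for all x ∈ ℝ, where sinc(ξ) = sin(πξ)/(πξ). If Λ₁ is periodic with period T > 0, i.e. Λ₁ + T = Λ₁, then 2T equals the number of points of Λ₁ in [0, T), and in particular T ∈ (1/2)ℤ. -/
open Real

open MeasureTheory

lemma norm_sq_interval_exp (a : ℝ) :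
    ‖∫ t in (0:ℝ)..1, Complex.exp ((2 * π * a * Complex.I) * t)‖ ^ 2 = _root_.sinc a ^ 2 := by
  rcases eq_or_ne a 0 with rfl | ha
  · simp [_root_.sinc]
  · rw [integral_exp_mul_complex (by
      simp [Complex.ext_iff, pi_ne_zero, ha, mul_ne_zero])]
    have hπa : (π * a) ≠ 0 := mul_ne_zero pi_ne_zero ha
    rw [_root_.sinc, if_neg ha]
    rw [norm_div, div_pow]
    simp only [Complex.ofReal_one, Complex.ofReal_zero, mul_one, mul_zero, Complex.exp_zero]
    have h1 : Complex.exp (2 * ↑π * ↑a * Complex.I) - 1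
        = ((Real.cos (2*π*a) - 1 : ℝ) : ℂ) + ((Real.sin (2*π*a) : ℝ) : ℂ) * Complex.I := by
      rw [show ((2:ℂ) * ↑π * ↑a * Complex.I) = ((2*π*a : ℝ) : ℂ) * Complex.I by push_cast; ring]
      rw [Complex.exp_mul_I, ← Complex.ofReal_cos, ← Complex.ofReal_sin]
      push_cast
      ring
    rw [h1]
    have h2 : ‖((Real.cos (2*π*a) - 1 : ℝ) : ℂ) + ((Real.sin (2*π*a) : ℝ) : ℂ) * Complex.I‖ ^ 2
        = (Real.cos (2*π*a) - 1)^2 + Real.sin (2*π*a)^2 := by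
      rw [Complex.sq_norm, Complex.normSq_add_mul_I]
    have h3 : ‖(2:ℂ) * ↑π * ↑a * Complex.I‖ ^ 2 = (2*π*a)^2 := by
      rw [show ((2:ℂ) * ↑π * ↑a * Complex.I) = ((2*π*a : ℝ) : ℂ) * Complex.I by push_cast; ring]
      rw [norm_mul, Complex.norm_I, mul_one, Complex.norm_real, Real.norm_eq_abs, sq_abs]
    rw [h2, h3]
    have key : (Real.cos (2*π*a) - 1)^2 + Real.sin (2*π*a)^2 = 4 * Real.sin (π*a)^2 := by
      have hc : Real.cos (2*π*a) = 2*Real.cos (π*a)^2 - 1 := by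
        rw [show 2*π*a = 2*(π*a) by ring, Real.cos_two_mul]
      have hs : Real.sin (2*π*a)^2 = 1 - Real.cos (2*π*a)^2 := by
        have := Real.sin_sq_add_cos_sq (2*π*a); nlinarith
      have h4 := Real.sin_sq_add_cos_sq (π*a)
      nlinarith
    rw [key, div_pow]
    field_simp
    ring

lemma tsum_sinc_sq (x : ℝ) : ∑' n : ℤ, _root_.sinc (x - n) ^ 2 = 1 := by
  haveI : Fact ((0:ℝ) < 1) := ⟨one_pos⟩
  set g : ℝ → ℂ := fun t => Complex.exp ((2 * π * x * Complex.I) * t) with hgdef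
  have hgc : Continuous g := by fun_prop
  have hgnorm : ∀ t : ℝ, ‖g t‖ = 1 := by
    intro t
    rw [hgdef]
    simp only
    rw [show (2 * (π:ℂ) * x * Complex.I) * t = ((2*π*x*t : ℝ):ℂ) * Complex.I by push_cast; ring]
    exact Complex.norm_exp_ofReal_mul_I _
  set F : AddCircle (1:ℝ) → ℂ := AddCircle.liftIoc 1 0 g with hFdef
  have hFmeas : Measurable F :=
    (hgc.measurable.comp measurable_subtype_coe).comp
      (AddCircle.measurableEquivIoc 1 0).measurable
  have hFnorm : ∀ z, ‖F z‖ = 1 := fun z => hgnorm _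
  have hmem : MemLp F 2 AddCircle.haarAddCircle :=
    MemLp.of_bound hFmeas.aestronglyMeasurable 1 (ae_of_all _ fun z => (hFnorm z).le)
  set fL := hmem.toLp F with hfL
  have hc : ∀ n : ℤ, fourierCoeff (⇑fL) n = fourierCoeff F n := by
    intro n
    simp only [fourierCoeff]
    apply integral_congr_ae
    filter_upwards [hmem.coeFn_toLp] with t ht
    rw [ht]
  have hFc : ∀ n : ℤ, fourierCoeff F n
      = ∫ t in (0:ℝ)..1, Complex.exp ((2 * π * (x - n) * Complex.I) * t) := by
    intro n
    rw [hFdef, fourierCoeff_liftIoc_eq, fourierCoeffOn_eq_integral]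
    norm_num
    apply intervalIntegral.integral_congr
    intro t ht
    simp only [fourier_coe_apply, smul_eq_mul]
    norm_num
    rw [← Complex.exp_conj, ← Complex.exp_add]
    congr 1
    simp only [map_mul, Complex.conj_I, map_ofNat, Complex.conj_ofReal, map_intCast]
    push_cast
    ring
  have parseval := tsum_sq_fourierCoeff fL
  have hrhs : ∫ t, ‖fL t‖ ^ 2 ∂AddCircle.haarAddCircle = 1 := by
    rw [integral_congr_ae (g := fun _ => (1:ℝ))]
    · simp
    · filter_upwards [hmem.coeFn_toLp] with t ht
      rw [ht, hFnorm t]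
      norm_num
  calc ∑' n : ℤ, _root_.sinc (x - n) ^ 2
      = ∑' n : ℤ, ‖fourierCoeff (⇑fL) n‖ ^ 2 := by
        apply tsum_congr
        intro n
        rw [hc, hFc,
          show ((x:ℂ) - (n:ℂ)) = ((x - (n:ℝ) : ℝ) : ℂ) by push_cast; ring,
          norm_sq_interval_exp]
    _ = 1 := by rw [parseval, hrhs]

lemma lintegral_periodization (T : ℝ) (hT : 0 < T) (f : ℝ → ENNReal) (hf : Measurable f) :
    ∑' n : ℤ, ∫⁻ y in Set.Ico 0 T, f (y + n * T) = ∫⁻ y, f y := by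
  have hterm : ∀ n : ℤ, (∫⁻ y in Set.Ico 0 T, f (y + n * T))
      = ∫⁻ y in Set.Ico ((n:ℝ) * T) (n * T + T), f y := by
    intro n
    rw [← lintegral_indicator measurableSet_Ico, ← lintegral_indicator measurableSet_Ico]
    rw [← MeasureTheory.lintegral_add_right_eq_self
      (fun y => (Set.Ico ((n:ℝ)*T) (n*T+T)).indicator f y) ((n:ℝ) * T)]
    apply lintegral_congr
    intro y
    by_cases hy : y ∈ Set.Ico (0:ℝ) T
    · rw [Set.indicator_of_mem hy, Set.indicator_of_mem]
      obtain ⟨h1, h2⟩ := hy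
      exact ⟨by linarith, by linarith⟩
    · rw [Set.indicator_of_notMem hy, Set.indicator_of_notMem]
      intro ⟨h1, h2⟩
      exact hy ⟨by linarith, by linarith⟩
  simp_rw [hterm]
  rw [← MeasureTheory.lintegral_iUnion (fun n => measurableSet_Ico)]
  · rw [show (⋃ n : ℤ, Set.Ico ((n:ℝ) * T) ((n:ℝ) * T + T)) = Set.univ from ?_,
      Measure.restrict_univ]
    ext y
    simp only [Set.mem_iUnion, Set.mem_univ, iff_true, Set.mem_Ico]
    exact ⟨⌊y / T⌋, by
      constructor
      · have := Int.sub_floor_div_mul_nonneg y hT; linarith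
      · have := Int.sub_floor_div_mul_lt y hT; linarith⟩
  · intro i j hij
    simp only [Function.onFun, Set.disjoint_left]
    intro y ⟨h1, h2⟩ ⟨h3, h4⟩
    apply hij
    have hi : (i:ℝ) < (j:ℝ) + 1 := by
      have : (i:ℝ) * T < ((j:ℝ) + 1) * T := by nlinarith
      exact lt_of_mul_lt_mul_right this hT.le
    have hj : (j:ℝ) < (i:ℝ) + 1 := by
      have : (j:ℝ) * T < ((i:ℝ) + 1) * T := by nlinarith
      exact lt_of_mul_lt_mul_right this hT.le
    have hi' : i < j + 1 := by exact_mod_cast hi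
    have hj' : j < i + 1 := by exact_mod_cast hj
    omega

lemma measurable_sinc_sq : Measurable (fun y : ℝ => ENNReal.ofReal (_root_.sinc y ^ 2)) := by
  apply ENNReal.measurable_ofReal.comp
  apply Measurable.pow_const
  unfold _root_.sinc
  exact Measurable.ite (measurableSet_eq) measurable_const
    ((Real.measurable_sin.comp (measurable_const.mul measurable_id)).div
      (measurable_const.mul measurable_id))

lemma summable_sinc_sq (x : ℝ) : Summable (fun n : ℤ => _root_.sinc (x - n) ^ 2) := by
  by_contra h
  have := tsum_eq_zero_of_not_summable h
  rw [tsum_sinc_sq x] at this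
  norm_num at this

lemma lintegral_sinc_sq : ∫⁻ y : ℝ, ENNReal.ofReal (_root_.sinc y ^ 2) = 1 := by
  rw [← lintegral_periodization 1 one_pos _ measurable_sinc_sq]
  have : ∀ n : ℤ, ∀ y : ℝ, (y + (n:ℝ) * 1) = y - (-n : ℤ) := by intro n y; push_cast; ring
  calc ∑' n : ℤ, ∫⁻ y in Set.Ico (0:ℝ) 1, ENNReal.ofReal (_root_.sinc (y + n * 1) ^ 2)
      = ∫⁻ y in Set.Ico (0:ℝ) 1, ∑' n : ℤ, ENNReal.ofReal (_root_.sinc (y + n * 1) ^ 2) := by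
        rw [MeasureTheory.lintegral_tsum]
        intro n
        exact (measurable_sinc_sq.comp (measurable_id.add_const _)).aemeasurable
    _ = ∫⁻ y in Set.Ico (0:ℝ) 1, 1 := by
        apply lintegral_congr
        intro y
        have h1 : ∑' n : ℤ, ENNReal.ofReal (_root_.sinc (y + n * 1) ^ 2)
            = ∑' n : ℤ, ENNReal.ofReal (_root_.sinc (y - n) ^ 2) := by
          rw [← (Equiv.neg ℤ).tsum_eq (fun n : ℤ => ENNReal.ofReal (_root_.sinc (y - n) ^ 2))]
          apply tsum_congr
          intro n
          rw [this n y]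
          norm_num
        rw [h1, ← ENNReal.ofReal_tsum_of_nonneg (fun n => sq_nonneg _) (summable_sinc_sq y),
          tsum_sinc_sq y]
        norm_num
    _ = 1 := by simp

theorem stmt16 (Λ : Set ℝ)
    (hdisc : ∀ a b : ℝ, (Λ ∩ Set.Icc a b).Finite)
    (htile : ∀ x : ℝ, ∑' lam : Λ, (_root_.sinc (x - (lam : ℝ))) ^ 2 = 2)
    (T : ℝ) (hT : 0 < T) (hper : (fun x => x + T) '' Λ = Λ) :
    2 * T = ((Λ ∩ Set.Ico 0 T).ncard : ℝ) ∧ ∃ n : ℤ, T = (n : ℝ) / 2 := by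
  -- shifting by multiples of T preserves Λ
  have hfwd : ∀ y ∈ Λ, y + T ∈ Λ := by
    intro y hy
    rw [← hper]
    exact ⟨y, hy, rfl⟩
  have hbwd : ∀ y ∈ Λ, y - T ∈ Λ := by
    intro y hy
    rw [← hper] at hy
    obtain ⟨z, hz, hzy⟩ := hy
    simpa [← hzy] using hz
  have hshift : ∀ (n : ℤ), ∀ y ∈ Λ, y + n * T ∈ Λ := by
    intro n
    induction n using Int.induction_on with
    | zero => simpa using fun y hy => hy
    | succ k ih =>
        intro y hy
        have := hfwd _ (ih y hy)
        convert this using 1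
        push_cast; ring
    | pred k ih =>
        intro y hy
        have := hbwd _ (ih y hy)
        convert this using 1
        push_cast; ring
  -- countability
  have hcount : Λ.Countable := by
    have hsub : Λ ⊆ ⋃ n : ℕ, (Λ ∩ Set.Icc (-(n:ℝ)) n) := by
      intro x hx
      refine Set.mem_iUnion.2 ⟨⌈|x|⌉₊, hx, ?_, ?_⟩
      · have := Nat.le_ceil |x|; have := abs_le.1 (le_refl |x|); cases abs_cases x <;> linarith [Nat.le_ceil |x|]
      · cases abs_cases x <;> linarith [Nat.le_ceil |x|]
    exact ((Set.countable_iUnion fun n => (hdisc _ _).countable).mono hsub)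
  haveI : Countable ↥Λ := hcount.to_subtype
  set F := Λ ∩ Set.Ico 0 T with hFdef
  have hFfin : F.Finite := (hdisc 0 T).subset (Set.inter_subset_inter_right _ Set.Ico_subset_Icc_self)
  haveI := hFfin.fintype
  -- the bijection
  have hmem : ∀ (p : ↥F × ℤ), (p.1 : ℝ) + p.2 * T ∈ Λ := fun p => hshift p.2 _ p.1.2.1
  set e : ↥F × ℤ → ↥Λ := fun p => ⟨(p.1 : ℝ) + p.2 * T, hmem p⟩ with hedef
  have hbij : Function.Bijective e := by
    constructor
    · rintro ⟨⟨a, ha⟩, m⟩ ⟨⟨b, hb⟩, n⟩ hab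
      simp only [hedef, Subtype.mk.injEq] at hab
      obtain ⟨ha1, ha2⟩ := ha.2
      obtain ⟨hb1, hb2⟩ := hb.2
      have hmn : m = n := by
        have h1 : (m:ℝ) < (n:ℝ) + 1 := by
          have : (m:ℝ) * T < ((n:ℝ) + 1) * T := by nlinarith
          exact lt_of_mul_lt_mul_right this hT.le
        have h2 : (n:ℝ) < (m:ℝ) + 1 := by
          have : (n:ℝ) * T < ((m:ℝ) + 1) * T := by nlinarith
          exact lt_of_mul_lt_mul_right this hT.le
        have h1' : m < n + 1 := by exact_mod_cast h1
        have h2' : n < m + 1 := by exact_mod_cast h2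
        omega
      subst hmn
      have : a = b := by linarith [hab]
      simp [this]
    · rintro ⟨y, hy⟩
      refine ⟨⟨⟨y - ⌊y / T⌋ * T, ⟨?_, ?_, ?_⟩⟩, ⌊y / T⌋⟩, ?_⟩
      · have := hshift (-⌊y / T⌋) y hy
        convert this using 1
        push_cast; ring
      · exact Int.sub_floor_div_mul_nonneg y hT
      · exact Int.sub_floor_div_mul_lt y hT
      · simp only [hedef]
        congr 1
        ring
  set eq : ↥F × ℤ ≃ ↥Λ := Equiv.ofBijective e hbij with heq
  -- summability of the tile sum
  have hsummable : ∀ x : ℝ, Summable (fun lam : ↥Λ => _root_.sinc (x - (lam : ℝ)) ^ 2) := by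
    intro x
    by_contra h
    have := tsum_eq_zero_of_not_summable h
    rw [htile x] at this
    norm_num at this
  -- the key ENNReal computation
  have key : ENNReal.ofReal 2 * ENNReal.ofReal T = (F.ncard : ENNReal) := by
    calc ENNReal.ofReal 2 * ENNReal.ofReal T
        = ∫⁻ x in Set.Ico (0:ℝ) T, ENNReal.ofReal 2 := by
          rw [setLIntegral_const, Real.volume_Ico, sub_zero]
      _ = ∫⁻ x in Set.Ico (0:ℝ) T, ∑' lam : ↥Λ, ENNReal.ofReal (_root_.sinc (x - (lam:ℝ)) ^ 2) := by
          apply lintegral_congr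
          intro x
          rw [← htile x, ENNReal.ofReal_tsum_of_nonneg (fun _ => sq_nonneg _) (hsummable x)]
      _ = ∑' lam : ↥Λ, ∫⁻ x in Set.Ico (0:ℝ) T, ENNReal.ofReal (_root_.sinc (x - (lam:ℝ)) ^ 2) := by
          apply MeasureTheory.lintegral_tsum
          intro lam
          exact (measurable_sinc_sq.comp (measurable_id.sub_const _)).aemeasurable
      _ = ∑' p : ↥F × ℤ, ∫⁻ x in Set.Ico (0:ℝ) T,
            ENNReal.ofReal (_root_.sinc (x - ((eq p : ℝ))) ^ 2) := by
          rw [eq.tsum_eq (fun lam : ↥Λ => ∫⁻ x in Set.Ico (0:ℝ) T,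
            ENNReal.ofReal (_root_.sinc (x - (lam:ℝ)) ^ 2))]
      _ = ∑' lam0 : ↥F, ∑' n : ℤ, ∫⁻ x in Set.Ico (0:ℝ) T,
            ENNReal.ofReal (_root_.sinc (x - ((lam0:ℝ) + n * T)) ^ 2) := by
          rw [← ENNReal.tsum_prod (f := fun (a : ↥F) (b : ℤ) => ∫⁻ x in Set.Ico (0:ℝ) T,
            ENNReal.ofReal (_root_.sinc (x - ((a:ℝ) + b * T)) ^ 2))]
          exact tsum_congr fun p => rfl
      _ = ∑' lam0 : ↥F, (1 : ENNReal) := by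
          apply tsum_congr
          intro lam0
          set h : ℤ → ENNReal := fun m => ∫⁻ x in Set.Ico (0:ℝ) T,
            ENNReal.ofReal (_root_.sinc (x + m * T - (lam0:ℝ)) ^ 2) with hhdef
          have hre : ∀ n : ℤ, (∫⁻ x in Set.Ico (0:ℝ) T,
              ENNReal.ofReal (_root_.sinc (x - ((lam0:ℝ) + n * T)) ^ 2)) = h (-n) := by
            intro n
            rw [hhdef]
            simp only
            congr 1
            ext x
            congr 2
            push_cast; ring
          rw [tsum_congr hre]
          rw [show ∑' n : ℤ, h (-n) = ∑' n : ℤ, h n by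
            have := (Equiv.neg ℤ).tsum_eq h
            simpa [Equiv.neg_apply] using this]
          rw [hhdef]
          simp only
          have := lintegral_periodization T hT
            (fun y => ENNReal.ofReal (_root_.sinc (y - (lam0:ℝ)) ^ 2))
            (measurable_sinc_sq.comp (measurable_id.sub_const _))
          rw [this]
          have := MeasureTheory.lintegral_add_right_eq_self (μ := volume)
            (fun y : ℝ => ENNReal.ofReal (_root_.sinc y ^ 2)) (-(lam0:ℝ))
          simp_rw [← sub_eq_add_neg] at this
          rw [this, lintegral_sinc_sq]
      _ = (F.ncard : ENNReal) := by
          rw [tsum_fintype, Finset.sum_const, Finset.card_univ, nsmul_one, ← Nat.card_eq_fintype_card, Nat.card_coe_set_eq]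
  have hmain : 2 * T = (F.ncard : ℝ) := by
    have := congrArg ENNReal.toReal key
    rw [ENNReal.toReal_mul, ENNReal.toReal_ofReal (by norm_num : (0:ℝ) ≤ 2),
      ENNReal.toReal_ofReal hT.le] at this
    simpa using this
  exact ⟨hmain, ⟨F.ncard, by push_cast at hmain ⊢; linarith⟩⟩
end
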